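/- Let G be a connected locally finite simple graph and let D ⊆ E(G) be an edge set whose intersection with every bond of G is finite and of even cardinality. Then every edge e ∈ D lies in a finite circuit C of G with C ⊆ D. -/

import Mathlib

open Set

variable {V : Type*}

/-- The edge set of a cycle of `G` (a finite circuit). -/
def IsCircuit (G : SimpleGraph V) (C : Set (Sym2 V)) : Prop :=
  ∃ (v : V) (w : G.Walk v v), w.IsCycle ∧ C = {e | e ∈ w.edges}

/-- The cut `E(A, V∖A)`: edges of `G` with exactly one endvertex in `A`. -/
def cutEdges (G : SimpleGraph V) (A : Set V) : Set (Sym2 V) :=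
  {e | ∃ x y, G.Adj x y ∧ x ∈ A ∧ y ∉ A ∧ e = s(x, y)}

/-- `C` is a cut of `G`. -/
def IsCut (G : SimpleGraph V) (C : Set (Sym2 V)) : Prop :=
  ∃ A : Set V, C = cutEdges G A

/-- A bond is a ⊆-minimal nonempty cut. -/
def IsBond (G : SimpleGraph V) (B : Set (Sym2 V)) : Prop :=
  IsCut G B ∧ B ≠ ∅ ∧ ∀ C, IsCut G C → C ≠ ∅ → C ⊆ B → C = B

/-- Two edge sets are orthogonal: their intersection is finite and of even cardinality. -/
def EvenInter (D F : Set (Sym2 V)) : Prop :=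
  (D ∩ F).Finite ∧ Even (D ∩ F).ncard

/-- A ray in `G`. -/
def IsRay (G : SimpleGraph V) (R : ℕ → V) : Prop :=
  Function.Injective R ∧ ∀ n, G.Adj (R n) (R (n + 1))

/-- A double ray in `G`. -/
def IsDoubleRay (G : SimpleGraph V) (R : ℤ → V) : Prop :=
  Function.Injective R ∧ ∀ n, G.Adj (R n) (R (n + 1))

/-- The edge set of a double ray. -/
def doubleRayEdges (R : ℤ → V) : Set (Sym2 V) :=
  {e | ∃ n : ℤ, e = s(R n, R (n + 1))}

/-- `D` is the edge set of some double ray of `G`. -/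
def IsDoubleRayEdgeSet (G : SimpleGraph V) (D : Set (Sym2 V)) : Prop :=
  ∃ R : ℤ → V, IsDoubleRay G R ∧ D = doubleRayEdges R

/-- `a` and `b` are joined by a walk of `G` all of whose vertices avoid `S`,
i.e. they lie in a common component of `G − S`. -/
def ConnAvoiding (G : SimpleGraph V) (S : Set V) (a b : V) : Prop :=
  ∃ w : G.Walk a b, ∀ x ∈ w.support, x ∉ S

/-- `v` lies in `C(S,R)`, the component of `G − S` containing a tail of the ray `R`. -/
def InC (G : SimpleGraph V) (S : Set V) (R : ℕ → V) (v : V) : Prop :=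
  ∃ m : ℕ, (∀ n, R (m + n) ∉ S) ∧ ConnAvoiding G S v (R m)

/-- The rays `R` and `R'` are equivalent (lie in the same end): for every finite `S`
some component of `G − S` contains a tail of both. -/
def RayEquiv (G : SimpleGraph V) (R R' : ℕ → V) : Prop :=
  ∀ S : Set V, S.Finite → ∃ m m', (∀ n, R (m + n) ∉ S) ∧ (∀ n, R' (m' + n) ∉ S) ∧
    ConnAvoiding G S (R m) (R' m')

/-- The sequence `v` of vertices converges to the end of the ray `R`: for every finite `S`
all but finitely many `v i` lie in `C(S,R)`. -/
def ConvergesTo (G : SimpleGraph V) (R : ℕ → V) (v : ℕ → V) : Prop :=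
  ∀ S : Set V, S.Finite → {i : ℕ | ¬ InC G S R (v i)}.Finite

/-- `F` is the vertex set of a `k`-fan from `u` to `Y`: a union of `k` paths starting
at `u`, pairwise sharing no vertex other than `u`, ending in `k` distinct vertices of `Y`. -/
def IsFan (G : SimpleGraph V) (k : ℕ) (u : V) (Y : Set V) (F : Set V) : Prop :=
  ∃ (ends : Fin k → V) (P : ∀ i, G.Walk u (ends i)),
    (∀ i, (P i).IsPath) ∧ (∀ i, ends i ∈ Y) ∧ Function.Injective ends ∧
    (∀ i j, i ≠ j → ∀ x, x ∈ (P i).support → x ∈ (P j).support → x = u) ∧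
    F = ⋃ i, {x | x ∈ (P i).support}

/-- `L` is the vertex set of a `k`-linkage from `x` to `y`: a union of `k` paths from
`x` to `y` pairwise sharing no vertices other than `x` and `y`. -/
def IsLinkage (G : SimpleGraph V) (k : ℕ) (x y : V) (L : Set V) : Prop :=
  ∃ P : Fin k → G.Walk x y,
    (∀ i, (P i).IsPath) ∧ Function.Injective P ∧
    (∀ i j, i ≠ j → ∀ z, z ∈ (P i).support → z ∈ (P j).support → z = x ∨ z = y) ∧
    L = ⋃ i, {z | z ∈ (P i).support}

/-- The end represented by the ray `R` is `k`-padded: for every equivalent ray `R'`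
there is a finite `S` such that every vertex of `C(S,R')` admits a `k`-fan to the
image of `R'` in `G`. -/
def IsPaddedEnd (G : SimpleGraph V) (k : ℕ) (R : ℕ → V) : Prop :=
  ∀ R' : ℕ → V, IsRay G R' → RayEquiv G R R' →
    ∃ S : Set V, S.Finite ∧ ∀ v, InC G S R' v → ∃ F, IsFan G k v (Set.range R') F

/-- `G` is `k`-padded at infinity: every end of `G` is `k`-padded. -/
def PaddedAtInfinity (G : SimpleGraph V) (k : ℕ) : Prop :=
  ∀ R : ℕ → V, IsRay G R → IsPaddedEnd G k R

/-- `G` is `k`-connected: it has more than `k` vertices and deleting fewer than `k`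
vertices leaves it connected. -/
def KConnected (G : SimpleGraph V) (k : ℕ) : Prop :=
  (k : ℕ∞) < (Set.univ : Set V).encard ∧
  ∀ S : Set V, S.Finite → S.ncard < k → (G.induce (Sᶜ : Set V)).Connected

/-- The algebraic cycle space: edge sets meeting every vertex in an even number of edges. -/
def CAlg (G : SimpleGraph V) : Set (Set (Sym2 V)) :=
  {D | D ⊆ G.edgeSet ∧ ∀ v : V, {e ∈ D | v ∈ e}.Finite ∧ Even {e ∈ D | v ∈ e}.ncard}

/-- The finite-cycle space: symmetric-difference sums of finitely many finite circuits. -/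
def CFin (G : SimpleGraph V) : Set (Set (Sym2 V)) :=
  {D | ∃ l : List (Set (Sym2 V)), (∀ C ∈ l, IsCircuit G C) ∧ D = l.foldr symmDiff ∅}

/-!
Let `e = xy ∈ D`. If `x` and `y` are joined in `D - e`, that path closes up with `e` to the
required circuit. Otherwise let `A` be the vertices reachable from `x` in `D - e` and `B` the
component of `G - A` containing `y`. Both `B` and its complement (which is `A` together with the
other components of `G - A`, each attached to `A`) are connected, so `E(B, V ∖ B)` is a bond.
Every edge of `D` leaving `B` ends in `A`, hence is `e` by maximality of `A`: the bond meets `D`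
in the single edge `e`, contradicting evenness.
-/

open Set SimpleGraph

section Cuts

variable {G : SimpleGraph V}

lemma mk_mem_cutEdges_iff {A : Set V} {x y : V} :
    s(x, y) ∈ cutEdges G A ↔ G.Adj x y ∧ ¬(x ∈ A ↔ y ∈ A) := by
  constructor
  · rintro ⟨u, v, huv, hu, hv, heq⟩
    rcases Sym2.eq_iff.mp heq with ⟨rfl, rfl⟩ | ⟨rfl, rfl⟩
    · exact ⟨huv, fun h => hv (h.mp hu)⟩
    · exact ⟨huv.symm, fun h => hv (h.mpr hu)⟩
  · rintro ⟨hxy, hne⟩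
    by_cases hx : x ∈ A
    · exact ⟨x, y, hxy, hx, fun hy => hne (iff_of_true hx hy), rfl⟩
    · exact ⟨y, x, hxy.symm, by tauto, hx, Sym2.eq_swap⟩

lemma cutEdges_compl (A : Set V) : cutEdges G Aᶜ = cutEdges G A := by
  ext f
  induction f using Sym2.ind with
  | _ x y => simp only [mk_mem_cutEdges_iff, mem_compl_iff, not_iff_not]

lemma SimpleGraph.Walk.mem_iff_mem_of_forall_notMem_cutEdges {A : Set V} {a b : V} (w : G.Walk a b)
    (hw : ∀ f ∈ w.edges, f ∉ cutEdges G A) : a ∈ A ↔ b ∈ A := by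
  induction w with
  | nil => rfl
  | cons h p ih =>
    simp only [Walk.edges_cons, List.mem_cons, forall_eq_or_imp] at hw
    have hside := hw.1
    rw [mk_mem_cutEdges_iff, not_and, not_not] at hside
    exact (hside h).trans (ih hw.2)

end Cuts

namespace ConnAvoiding

variable {G : SimpleGraph V} {S T : Set V} {a b c : V}

lemma right_notMem (h : ConnAvoiding G S a b) : b ∉ S :=
  h.elim fun w hw => hw b w.end_mem_support

lemma refl (ha : a ∉ S) : ConnAvoiding G S a a :=
  ⟨Walk.nil, by simpa using ha⟩

lemma of_adj (hab : G.Adj a b) (ha : a ∉ S) (hb : b ∉ S) : ConnAvoiding G S a b :=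
  ⟨hab.toWalk, by simp [ha, hb]⟩

lemma symm (h : ConnAvoiding G S a b) : ConnAvoiding G S b a :=
  h.elim fun w hw => ⟨w.reverse, by simpa using hw⟩

lemma trans (hab : ConnAvoiding G S a b) (hbc : ConnAvoiding G S b c) : ConnAvoiding G S a c := by
  obtain ⟨w, hw⟩ := hab
  obtain ⟨w', hw'⟩ := hbc
  refine ⟨w.append w', fun x hx => ?_⟩
  rcases (w.mem_support_append_iff w').mp hx with hx | hx
  exacts [hw x hx, hw' x hx]

lemma mono (hST : S ⊆ T) (h : ConnAvoiding G T a b) : ConnAvoiding G S a b :=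
  h.elim fun w hw => ⟨w, fun x hx hxS => hw x hx (hST hxS)⟩

lemma mem_iff_mem_of_cutEdges_subset {A : Set V} (h : ConnAvoiding G S a b)
    (hA : cutEdges G A ⊆ cutEdges G S) : a ∈ A ↔ b ∈ A := by
  obtain ⟨w, hw⟩ := h
  refine w.mem_iff_mem_of_forall_notMem_cutEdges fun f hf hfA => ?_
  obtain ⟨u, v, -, hu, -, rfl⟩ := hA hfA
  exact hw u (w.fst_mem_support_of_mem_edges hf) hu

lemma compl_setOf (h : ConnAvoiding G S a b) :
    ConnAvoiding G {v | ConnAvoiding G S a v}ᶜ a b := by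
  classical
  obtain ⟨w, hw⟩ := h
  refine ⟨w, fun z hz => ?_⟩
  simp only [mem_compl_iff, mem_ofPred_eq, not_not]
  exact ⟨w.takeUntil z hz, fun u hu => hw u (w.support_takeUntil_subset_support hz hu)⟩

end ConnAvoiding

section Bonds

variable {G : SimpleGraph V}

lemma connAvoiding_compl_setOf_reachable {H : SimpleGraph V} (hHG : H ≤ G) {x a : V}
    (h : H.Reachable x a) : ConnAvoiding G {v | H.Reachable x v}ᶜ x a := by
  classical
  obtain ⟨w⟩ := h
  refine ⟨w.mapLe hHG, fun z hz => ?_⟩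
  rw [Walk.support_mapLe_eq_support] at hz
  simpa using ⟨w.takeUntil z hz⟩

lemma isBond_cutEdges_of_connAvoiding {B : Set V}
    (hB : ∀ a ∈ B, ∀ b ∈ B, ConnAvoiding G Bᶜ a b)
    (hBc : ∀ a ∉ B, ∀ b ∉ B, ConnAvoiding G B a b) (hne : (cutEdges G B).Nonempty) :
    IsBond G (cutEdges G B) := by
  refine ⟨⟨B, rfl⟩, hne.ne_empty, ?_⟩
  rintro C ⟨A, rfl⟩ hC hCB
  have hside : ∀ u v, (u ∈ B ↔ v ∈ B) → (u ∈ A ↔ v ∈ A) := by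
    intro u v huv
    by_cases hu : u ∈ B
    · exact (hB u hu v (huv.mp hu)).mem_iff_mem_of_cutEdges_subset
        (by rwa [cutEdges_compl])
    · exact (hBc u hu v (hu ∘ huv.mpr)).mem_iff_mem_of_cutEdges_subset hCB
  obtain ⟨-, p, q, hpq, hp, hq, rfl⟩ := nonempty_iff_ne_empty.mpr hC
  have hpqB := (mk_mem_cutEdges_iff.mp (hCB ⟨p, q, hpq, hp, hq, rfl⟩)).2
  have hA_iff : ∀ u, u ∈ A ↔ (u ∈ B ↔ p ∈ B) := by
    intro u
    by_cases hu : u ∈ B ↔ p ∈ B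
    · exact iff_of_true ((hside u p hu).mpr hp) hu
    · exact iff_of_false (fun h => hq ((hside u q (by tauto)).mp h)) hu
  refine hCB.antisymm fun f hf => ?_
  induction f using Sym2.ind with
  | _ u v =>
    obtain ⟨huv, huvB⟩ := mk_mem_cutEdges_iff.mp hf
    refine mk_mem_cutEdges_iff.mpr ⟨huv, ?_⟩
    rw [hA_iff u, hA_iff v]
    tauto

variable {A : Set V} {x y : V}

lemma mk_mem_cutEdges_setOf_connAvoiding (hxy : G.Adj x y) (hx : x ∈ A) (hy : y ∉ A) :
    s(x, y) ∈ cutEdges G {v | ConnAvoiding G A y v} :=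
  mk_mem_cutEdges_iff.mpr ⟨hxy, fun h => (h.mpr (.refl hy)).right_notMem hx⟩

/-- The complement of the component of `G - A` containing `y` is connected, provided `A` is. -/
lemma connAvoiding_setOf_of_not_connAvoiding (hconn : G.Preconnected)
    (hA : ∀ a ∈ A, ConnAvoiding G Aᶜ a x) (hx : x ∈ A) {v : V}
    (hv : ¬ ConnAvoiding G A y v) : ConnAvoiding G {u | ConnAvoiding G A y u} v x := by
  have hAB : {u | ConnAvoiding G A y u} ⊆ Aᶜ := fun u hu => hu.right_notMem
  obtain ⟨w⟩ := hconn v x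
  induction w with
  | nil => exact .refl fun h => h.right_notMem hx
  | @cons v u _ hvu p ih =>
    by_cases hvA : v ∈ A
    · exact (hA v hvA).mono hAB
    have hu : ¬ ConnAvoiding G A y u := fun hu =>
      hv (hu.trans (.of_adj hvu.symm hu.right_notMem hvA))
    exact (ConnAvoiding.of_adj hvu hv hu).trans (ih hA hx hu)

theorem isBond_cutEdges_setOf_connAvoiding (hconn : G.Preconnected)
    (hA : ∀ a ∈ A, ConnAvoiding G Aᶜ a x) (hxy : G.Adj x y) (hx : x ∈ A) (hy : y ∉ A) :
    IsBond G (cutEdges G {v | ConnAvoiding G A y v}) :=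
  isBond_cutEdges_of_connAvoiding
    (fun _ ha _ hb => ha.compl_setOf.symm.trans hb.compl_setOf)
    (fun _ ha _ hb => (connAvoiding_setOf_of_not_connAvoiding hconn hA hx ha).trans
      (connAvoiding_setOf_of_not_connAvoiding hconn hA hx hb).symm)
    ⟨_, mk_mem_cutEdges_setOf_connAvoiding hxy hx hy⟩

end Bonds

section EdgeSets

variable {G : SimpleGraph V} {D : Set (Sym2 V)} {x y : V}

lemma fromEdgeSet_le_of_subset_edgeSet (hD : D ⊆ G.edgeSet) : fromEdgeSet D ≤ G :=
  (fromEdgeSet_le G).mpr (sdiff_subset.trans hD)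

lemma exists_isCircuit_of_reachable_deleteEdges (hD : D ⊆ G.edgeSet) (he : s(x, y) ∈ D)
    (hr : ((fromEdgeSet D).deleteEdges {s(x, y)}).Reachable x y) :
    ∃ C, IsCircuit G C ∧ s(x, y) ∈ C ∧ C ⊆ D := by
  have hxy : (fromEdgeSet D).Adj x y := (fromEdgeSet_adj D).mpr ⟨he, (hD he).ne⟩
  obtain ⟨u, p, hp, hep⟩ := adj_and_reachable_delete_edges_iff_exists_cycle.mp ⟨hxy, hr⟩
  have hle := fromEdgeSet_le_of_subset_edgeSet hD
  refine ⟨{f | f ∈ p.edges}, ⟨u, p.mapLe hle, hp.mapLe hle, by rw [Walk.edges_mapLe_eq_edges]⟩,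
    hep, fun f hf => ?_⟩
  have hf' := p.edges_subset_edgeSet hf
  rw [edgeSet_fromEdgeSet] at hf'
  exact hf'.1

lemma exists_isBond_inter_eq_singleton (hconn : G.Preconnected) (hD : D ⊆ G.edgeSet)
    (he : s(x, y) ∈ D) (hr : ¬ ((fromEdgeSet D).deleteEdges {s(x, y)}).Reachable x y) :
    ∃ B, IsBond G B ∧ D ∩ B = {s(x, y)} := by
  set H := (fromEdgeSet D).deleteEdges {s(x, y)}
  set A := {v | H.Reachable x v}
  have hHG : H ≤ G := (deleteEdges_le _).trans (fromEdgeSet_le_of_subset_edgeSet hD)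
  have hxy : G.Adj x y := hD he
  have hx : x ∈ A := Reachable.refl x
  refine ⟨_, isBond_cutEdges_setOf_connAvoiding hconn
    (fun a ha => (connAvoiding_compl_setOf_reachable hHG ha).symm) hxy hx hr, ?_⟩
  refine Subset.antisymm ?_ (singleton_subset_iff.mpr
    ⟨he, mk_mem_cutEdges_setOf_connAvoiding hxy hx hr⟩)
  rintro _ ⟨hfD, u, v, huv, hu, hv, rfl⟩
  have hvA : v ∈ A := by
    by_contra hvA
    exact hv (hu.trans (.of_adj huv hu.right_notMem hvA))
  by_contra hne
  have hvu : H.Adj v u := by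
    rw [deleteEdges_adj, fromEdgeSet_adj, Sym2.eq_swap]
    exact ⟨⟨hfD, huv.ne.symm⟩, hne⟩
  exact hu.right_notMem (hvA.trans hvu.reachable)

end EdgeSets

theorem stmt_16_general (G : SimpleGraph V) (hconn : G.Connected)
    (D : Set (Sym2 V)) (hD : D ⊆ G.edgeSet)
    (h : ∀ B, IsBond G B → EvenInter D B) :
    ∀ e ∈ D, ∃ C, IsCircuit G C ∧ e ∈ C ∧ C ⊆ D := by
  intro e he
  induction e using Sym2.ind with
  | _ x y =>
  by_cases hr : ((fromEdgeSet D).deleteEdges {s(x, y)}).Reachable x y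
  · exact exists_isCircuit_of_reachable_deleteEdges hD he hr
  · obtain ⟨B, hB, hDB⟩ := exists_isBond_inter_eq_singleton hconn.preconnected hD he hr
    have heven := (h B hB).2
    rw [hDB, ncard_singleton] at heven
    exact absurd heven Nat.not_even_one

/-- In a connected locally finite graph, every edge of an edge set having finite even
intersection with every bond lies in a finite circuit contained in that edge set. -/
theorem stmt_16 (G : SimpleGraph V) (hconn : G.Connected)
    (hlf : ∀ x : V, (G.neighborSet x).Finite)
    (D : Set (Sym2 V)) (hD : D ⊆ G.edgeSet)
    (h : ∀ B, IsBond G B → EvenInter D B) :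
    ∀ e ∈ D, ∃ C, IsCircuit G C ∧ e ∈ C ∧ C ⊆ D :=
  stmt_16_general G hconn D hD h
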